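/- The Cayley hyperdeterminant is invariant under the action of SL(2) on the first axis: if ((a',b'),(c',d')) = p·((a,b),(c,d)) + q·((e,f),(g,h)) and ((e',f'),(g',h')) = r·((a,b),(c,d)) + s·((e,f),(g,h)) with ps - qr = 1, then Det(a',b',c',d',e',f',g',h') = Det(a,b,c,d,e,f,g,h). -/

import Mathlib

/-!
For `A = (a b; c d)` and `E = (e f; g h)`, the hyperdeterminant is the discriminant of the binary
quadratic form `det (x A + y E)`. Acting by `(p q; r s)` on the first axis turns the pencil
`x A + y E` into `(p x + r y) A + (q x + s y) E`, a linear substitution of determinant `p s - q r`,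
and such a substitution multiplies the discriminant by the square of its determinant.
-/

section

variable {R : Type*} [CommRing R]

/-- The coefficient of `x y` in `det (x A + y E)`. -/
def polarDet (a b c d e f g h : R) : R := a * h + d * e - c * f - b * g

theorem discrim_linear_subst (α β γ p q r s : R) :
    discrim (α * p ^ 2 + β * p * q + γ * q ^ 2) (2 * α * p * r + β * (p * s + q * r) + 2 * γ * q * s)
        (α * r ^ 2 + β * r * s + γ * s ^ 2) =
      (p * s - q * r) ^ 2 * discrim α β γ := by
  unfold discrim
  ring

theorem det_linear_comb (a b c d e f g h p q : R) :
    (p * a + q * e) * (p * d + q * h) - (p * b + q * f) * (p * c + q * g) =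
      (a * d - b * c) * p ^ 2 + polarDet a b c d e f g h * p * q + (e * h - f * g) * q ^ 2 := by
  unfold polarDet
  ring

theorem polarDet_linear_comb (a b c d e f g h p q r s : R) :
    polarDet (p * a + q * e) (p * b + q * f) (p * c + q * g) (p * d + q * h)
        (r * a + s * e) (r * b + s * f) (r * c + s * g) (r * d + s * h) =
      2 * (a * d - b * c) * p * r + polarDet a b c d e f g h * (p * s + q * r)
        + 2 * (e * h - f * g) * q * s := by
  unfold polarDet
  ring

end

/-- Cayley's hyperdeterminant is invariant under the SL(2) action on the first axis. -/
theorem cayley_hyperdet_sl2_first_axis {R : Type*} [CommRing R]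
    (a b c d e f g h p q r s : R) (hdet : p * s - q * r = 1) :
    ((p * a + q * e) * (r * d + s * h) + (p * d + q * h) * (r * a + s * e)
      - (p * c + q * g) * (r * b + s * f) - (p * b + q * f) * (r * c + s * g)) ^ 2
      - 4 * ((p * a + q * e) * (p * d + q * h) - (p * b + q * f) * (p * c + q * g))
          * ((r * a + s * e) * (r * d + s * h) - (r * b + s * f) * (r * c + s * g)) =
    (a * h + d * e - c * f - b * g) ^ 2 - 4 * (a * d - b * c) * (e * h - f * g) := by
  change discrim ((p * a + q * e) * (p * d + q * h) - (p * b + q * f) * (p * c + q * g))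
      (polarDet (p * a + q * e) (p * b + q * f) (p * c + q * g) (p * d + q * h)
        (r * a + s * e) (r * b + s * f) (r * c + s * g) (r * d + s * h))
      ((r * a + s * e) * (r * d + s * h) - (r * b + s * f) * (r * c + s * g)) =
    discrim (a * d - b * c) (polarDet a b c d e f g h) (e * h - f * g)
  rw [det_linear_comb, polarDet_linear_comb, det_linear_comb, discrim_linear_subst, hdet, one_pow,
    one_mul]
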